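/- arXiv:2002.11182 — 2 statements merged into one kernel-verified Lean document; each statement's English description precedes it below -/
import Mathlib

section
/- Suppose X ⊂ ℝ^d is a finite nonempty action set, each x ∈ X has an observation matrix A_x ∈ ℝ^{d×m} with ‖A_x‖₂ ≤ 1, V ∈ ℝ^{d×d} is symmetric positive definite with V ⪰ I_d, θ̂ ∈ ℝ^d, and β > 0. Let C = {θ ∈ ℝ^d : (θ−θ̂)ᵀ V (θ−θ̂) ≤ β}, let P = {x ∈ X : there exists θ ∈ C with ⟨x,θ⟩ = max_{y∈X} ⟨y,θ⟩}, and suppose α > 0 is such that for every v ∈ ℝ^d and every x, y ∈ P there exists z ∈ P with ⟨x−y, v⟩² ≤ α·‖A_zᵀ v‖². Then for every x ∈ P, Δ(x)² ≤ 8·α·β·max_{z∈P} I(z), where Δ(x) = max_{y∈X} (⟨y−x, θ̂⟩ + √β·‖y−x‖_{V^{-1}}) and I(z) = log det(I_m + A_zᵀ V^{-1} A_z). -/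
/-
Let `y` maximize the gap estimate and `w = y - x`. The optimistic parameter
`θ' = θ̂ + √β V⁻¹ w / ‖w‖_{V⁻¹}` lies in the confidence ellipsoid and realizes
`Δ(x) = ⟨y - x, θ'⟩`. A maximizer `y'` of `⟨·, θ'⟩` is then plausible, and as `x` is optimal for
some `θₓ` in the ellipsoid, `Δ(x) ≤ ⟨y' - x, θ' - θₓ⟩`. Local observability bounds the square of
this by `α ‖A_zᵀ (θ' - θₓ)‖²` for a plausible `z`; Cauchy–Schwarz in the geometry of `V` gives
`‖A_zᵀ v‖² ≤ λ_max(A_zᵀ V⁻¹ A_z) ‖v‖²_V`, and `‖θ' - θₓ‖²_V ≤ 4β` by the parallelogram law.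
Finally `A_zᵀ V⁻¹ A_z ≤ 1` because `‖A_z‖₂ ≤ 1` and `V⁻¹ ≤ 1`, and every eigenvalue `λ ∈ [0, 1]`
satisfies `λ ≤ 2 log (1 + λ) ≤ 2 I(z)`.
-/

open Matrix Finset Classical
open scoped MatrixOrder

lemma Real.le_two_mul_log_one_add {t : ℝ} (h0 : 0 ≤ t) (h2 : t ≤ 2) :
    t ≤ 2 * Real.log (1 + t) := by
  have h := Real.le_log_one_add_of_nonneg h0
  rw [div_le_iff₀ (by linarith)] at h
  nlinarith

namespace Matrix

variable {m n : Type*}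

lemma IsHermitian.dotProduct_mulVec_comm [Fintype n] {M : Matrix n n ℝ} (hM : M.IsHermitian)
    (x y : n → ℝ) : y ⬝ᵥ M *ᵥ x = x ⬝ᵥ M *ᵥ y := by
  rw [dotProduct_mulVec, ← mulVec_transpose, dotProduct_comm, (isHermitian_iff_isSymm.mp hM).eq]

lemma PosSemidef.sq_dotProduct_mulVec_le [Fintype n] {M : Matrix n n ℝ} (hM : M.PosSemidef)
    (x y : n → ℝ) : (x ⬝ᵥ M *ᵥ y) ^ 2 ≤ (x ⬝ᵥ M *ᵥ x) * (y ⬝ᵥ M *ᵥ y) := by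
  have hquad : ∀ t : ℝ,
      0 ≤ (y ⬝ᵥ M *ᵥ y) * (t * t) + 2 * (x ⬝ᵥ M *ᵥ y) * t + x ⬝ᵥ M *ᵥ x := fun t => by
    have h := hM.dotProduct_mulVec_nonneg (x + t • y)
    simp only [star_trivial, mulVec_add, mulVec_smul, dotProduct_add, add_dotProduct,
      dotProduct_smul, smul_dotProduct, smul_eq_mul,
      hM.isHermitian.dotProduct_mulVec_comm x y] at h
    linarith
  have hdiscrim := discrim_le_zero hquad
  rw [discrim] at hdiscrim
  nlinarith

lemma PosDef.sq_dotProduct_le [Fintype n] [DecidableEq n] {V : Matrix n n ℝ} (hV : V.PosDef)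
    (v w : n → ℝ) : (v ⬝ᵥ w) ^ 2 ≤ (v ⬝ᵥ V *ᵥ v) * (w ⬝ᵥ V⁻¹ *ᵥ w) := by
  have h := hV.posSemidef.sq_dotProduct_mulVec_le v (V⁻¹ *ᵥ w)
  rwa [mulVec_mulVec, mul_nonsing_inv _ ((isUnit_iff_isUnit_det V).mp hV.isUnit), one_mulVec,
    dotProduct_comm (V⁻¹ *ᵥ w)] at h

lemma PosSemidef.dotProduct_mulVec_sub_le [Fintype n] {M : Matrix n n ℝ} (hM : M.PosSemidef)
    (a b : n → ℝ) : (a - b) ⬝ᵥ M *ᵥ (a - b) ≤ 2 * (a ⬝ᵥ M *ᵥ a) + 2 * (b ⬝ᵥ M *ᵥ b) := by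
  have h := hM.dotProduct_mulVec_nonneg (a + b)
  simp only [star_trivial, mulVec_add, mulVec_sub, dotProduct_add, add_dotProduct,
    dotProduct_sub, sub_dotProduct] at h ⊢
  linarith

lemma dotProduct_mulVec_le_of_le_smul_one [Fintype n] [DecidableEq n] {B : Matrix n n ℝ}
    {c : ℝ} (hB : B ≤ c • 1) (u : n → ℝ) : u ⬝ᵥ B *ᵥ u ≤ c * (u ⬝ᵥ u) := by
  have h := (le_iff.mp hB).dotProduct_mulVec_nonneg u
  simp only [star_trivial, sub_mulVec, smul_mulVec, one_mulVec, dotProduct_sub,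
    dotProduct_smul, smul_eq_mul] at h
  linarith

lemma posDef_of_one_le [DecidableEq n] {V : Matrix n n ℝ} (hV : 1 ≤ V) : V.PosDef := by
  simpa using PosDef.posSemidef_add (le_iff.mp hV) PosDef.one

lemma inv_le_one_of_one_le [Fintype n] [DecidableEq n] {V : Matrix n n ℝ} (hV : 1 ≤ V) :
    V⁻¹ ≤ 1 := by
  have hVsa : IsSelfAdjoint V := by
    have h := (le_iff.mp hV).isHermitian.add isHermitian_one
    rwa [sub_add_cancel] at h
  have hspec := (CFC.one_le_iff (R := ℝ) V).mp hV
  have hunit : IsUnit V := spectrum.isUnit_of_zero_notMem ℝ fun h => by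
    linarith [hspec 0 h]
  have hinv : V⁻¹ = cfc (fun x : ℝ => x⁻¹) V :=
    (nonsing_inv_eq_ringInverse V).trans (cfc_ringInverse_id (R := ℝ) (a := V) hunit).symm
  rw [hinv]
  exact cfc_le_one _ V fun x hx => inv_le_one_of_one_le₀ (hspec x hx)

lemma transpose_mul_mul_le_one [Fintype m] [Fintype n] [DecidableEq m] [DecidableEq n]
    {A : Matrix n m ℝ} {W : Matrix n n ℝ} (hA : Aᵀ * A ≤ 1) (hW : W ≤ 1) :
    Aᵀ * W * A ≤ 1 := by
  refine le_trans ?_ hA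
  have h := (le_iff.mp hW).conjTranspose_mul_mul_same A
  rw [conjTranspose_eq_transpose_of_trivial, Matrix.mul_sub, Matrix.sub_mul,
    Matrix.mul_one] at h
  exact le_iff.mpr h

lemma transpose_mulVec_dotProduct_self_le [Fintype m] [Fintype n] [DecidableEq m]
    [DecidableEq n] {A : Matrix n m ℝ} {V : Matrix n n ℝ} (hV : V.PosDef) {c : ℝ} (hc : 0 ≤ c)
    (hB : Aᵀ * V⁻¹ * A ≤ c • 1) (v : n → ℝ) :
    (Aᵀ *ᵥ v) ⬝ᵥ (Aᵀ *ᵥ v) ≤ c * (v ⬝ᵥ V *ᵥ v) := by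
  have hu : (Aᵀ *ᵥ v) ⬝ᵥ (Aᵀ *ᵥ v) = v ⬝ᵥ A *ᵥ (Aᵀ *ᵥ v) := by
    rw [dotProduct_mulVec v, ← mulVec_transpose]
  set u := Aᵀ *ᵥ v
  have hAu : (A *ᵥ u) ⬝ᵥ V⁻¹ *ᵥ (A *ᵥ u) = u ⬝ᵥ (Aᵀ * V⁻¹ * A) *ᵥ u := by
    rw [← mulVec_mulVec, ← mulVec_mulVec, dotProduct_mulVec u, vecMul_transpose]
  -- `‖u‖⁴ = ⟨v, A u⟩² ≤ ‖v‖²_V ‖A u‖²_{V⁻¹} ≤ ‖v‖²_V · c ‖u‖²`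
  have hcs := hV.sq_dotProduct_le v (A *ᵥ u)
  rw [← hu, hAu] at hcs
  have hc_bound := dotProduct_mulVec_le_of_le_smul_one hB u
  have hu0 : 0 ≤ u ⬝ᵥ u := dotProduct_self_star_nonneg u
  have hv0 : 0 ≤ v ⬝ᵥ V *ᵥ v := by simpa using hV.posSemidef.dotProduct_mulVec_nonneg v
  nlinarith [mul_le_mul_of_nonneg_left hc_bound hv0, mul_nonneg hc hv0]

lemma IsHermitian.det_one_add [Fintype n] [DecidableEq n] {B : Matrix n n ℝ}
    (hB : B.IsHermitian) : (1 + B).det = ∏ i, (1 + hB.eigenvalues i) := by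
  have h : 1 + B = cfc (fun t : ℝ => 1 + t) B := by
    rw [cfc_const_add 1 (fun t => t) B, cfc_id' ℝ B]
    simp [Algebra.algebraMap_eq_smul_one]
  rw [h, hB.cfc_eq]
  simp [IsHermitian.cfc, -Unitary.conjStarAlgAut_apply, det_diagonal]

lemma PosSemidef.log_det_one_add_eq_sum [Fintype n] [DecidableEq n] {B : Matrix n n ℝ}
    (hB : B.PosSemidef) :
    Real.log (1 + B).det = ∑ i, Real.log (1 + hB.isHermitian.eigenvalues i) := by
  rw [hB.isHermitian.det_one_add, Real.log_prod]
  intro i _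
  linarith [hB.eigenvalues_nonneg i]

lemma PosSemidef.log_det_one_add_nonneg [Fintype n] [DecidableEq n] {B : Matrix n n ℝ}
    (hB : B.PosSemidef) : 0 ≤ Real.log (1 + B).det := by
  rw [hB.log_det_one_add_eq_sum]
  exact sum_nonneg fun i _ => Real.log_nonneg (by linarith [hB.eigenvalues_nonneg i])

lemma PosSemidef.le_two_mul_log_det_one_add_smul_one [Fintype n] [DecidableEq n]
    {B : Matrix n n ℝ} (hB : B.PosSemidef) (hB1 : B ≤ 1) :
    B ≤ (2 * Real.log (1 + B).det) • 1 := by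
  have hBsa : IsSelfAdjoint B := hB.isHermitian
  have hle_one := (CFC.le_one_iff (R := ℝ) B).mp hB1
  rw [← Algebra.algebraMap_eq_smul_one, le_algebraMap_iff_spectrum_le,
    hB.isHermitian.spectrum_real_eq_range_eigenvalues, hB.log_det_one_add_eq_sum]
  rintro _ ⟨j, rfl⟩
  have hj1 := hle_one _ (hB.isHermitian.eigenvalues_mem_spectrum_real j)
  calc hB.isHermitian.eigenvalues j
      ≤ 2 * Real.log (1 + hB.isHermitian.eigenvalues j) :=
        Real.le_two_mul_log_one_add (hB.eigenvalues_nonneg j) (by linarith)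
    _ ≤ 2 * ∑ i, Real.log (1 + hB.isHermitian.eigenvalues i) := by
        gcongr
        exact single_le_sum (f := fun i => Real.log (1 + hB.isHermitian.eigenvalues i))
          (fun i _ => Real.log_nonneg (by linarith [hB.eigenvalues_nonneg i])) (mem_univ j)

/-- For `w = 0` the witness below degenerates to `θ = θh` through the junk value `√β / 0 = 0`. -/
lemma PosDef.exists_dotProduct_eq_add_sqrt_mul_sqrt [Fintype n] [DecidableEq n]
    {V : Matrix n n ℝ} (hV : V.PosDef) (θh w : n → ℝ) {β : ℝ} (hβ : 0 ≤ β) :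
    ∃ θ, (θ - θh) ⬝ᵥ V *ᵥ (θ - θh) ≤ β ∧
      w ⬝ᵥ θ = w ⬝ᵥ θh + Real.sqrt β * Real.sqrt (w ⬝ᵥ V⁻¹ *ᵥ w) := by
  set ρ := Real.sqrt (w ⬝ᵥ V⁻¹ *ᵥ w)
  have hρ : w ⬝ᵥ V⁻¹ *ᵥ w = ρ ^ 2 :=
    (Real.sq_sqrt (by simpa using hV.inv.posSemidef.dotProduct_mulVec_nonneg w)).symm
  have hVV : V * V⁻¹ = 1 := mul_nonsing_inv V ((isUnit_iff_isUnit_det V).mp hV.isUnit)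
  refine ⟨θh + (Real.sqrt β / ρ) • (V⁻¹ *ᵥ w), ?_, ?_⟩
  · rw [add_sub_cancel_left, mulVec_smul, mulVec_mulVec, hVV, one_mulVec, smul_dotProduct,
      dotProduct_smul, dotProduct_comm, hρ, smul_eq_mul, smul_eq_mul]
    rcases eq_or_ne ρ 0 with h | h
    · simp [h, hβ]
    · field_simp
      rw [Real.sq_sqrt hβ]
  · rw [dotProduct_add, dotProduct_smul, hρ, smul_eq_mul]
    rcases eq_or_ne ρ 0 with h | h
    · simp [h]
    · field_simp

lemma exists_gap_le_dotProduct [Fintype n] [DecidableEq n] {X : Finset (n → ℝ)}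
    (hX : X.Nonempty) {V : Matrix n n ℝ} (hV : V.PosDef) (θh : n → ℝ) {β : ℝ} (hβ : 0 ≤ β)
    {x θx : n → ℝ} (hθx : ∀ y ∈ X, y ⬝ᵥ θx ≤ x ⬝ᵥ θx) :
    ∃ y' ∈ X, ∃ θ', ((θ' - θh) ⬝ᵥ V *ᵥ (θ' - θh) ≤ β ∧ ∀ y ∈ X, y ⬝ᵥ θ' ≤ y' ⬝ᵥ θ') ∧
      X.sup' hX (fun y => (y - x) ⬝ᵥ θh + Real.sqrt β * Real.sqrt ((y - x) ⬝ᵥ V⁻¹ *ᵥ (y - x)))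
        ≤ (y' - x) ⬝ᵥ (θ' - θx) := by
  obtain ⟨y₀, hy₀, hsup⟩ := exists_mem_eq_sup' hX
    (fun y => (y - x) ⬝ᵥ θh + Real.sqrt β * Real.sqrt ((y - x) ⬝ᵥ V⁻¹ *ᵥ (y - x)))
  obtain ⟨θ', hθ'C, hθ'⟩ := hV.exists_dotProduct_eq_add_sqrt_mul_sqrt θh (y₀ - x) hβ
  obtain ⟨y', hy', hy'max⟩ := exists_max_image X (· ⬝ᵥ θ') hX
  refine ⟨y', hy', θ', ⟨hθ'C, hy'max⟩, ?_⟩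
  rw [hsup, ← hθ']
  have h₁ := hy'max y₀ hy₀
  have h₂ := hθx y' hy'
  simp only [sub_dotProduct, dotProduct_sub] at h₁ h₂ ⊢
  linarith

end Matrix

theorem stmt8_general (d m : ℕ) (X : Finset (Fin d → ℝ)) (hX : X.Nonempty)
    (A : (Fin d → ℝ) → Matrix (Fin d) (Fin m) ℝ)
    (hA : ∀ x ∈ X, ((1 : Matrix (Fin m) (Fin m) ℝ) - (A x)ᵀ * A x).PosSemidef)
    (V : Matrix (Fin d) (Fin d) ℝ)
    (hVI : (V - (1 : Matrix (Fin d) (Fin d) ℝ)).PosSemidef)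
    (θh : Fin d → ℝ) (β : ℝ) (hβ : 0 < β)
    (hP : (X.filter fun a => ∃ θ : Fin d → ℝ,
        (θ - θh) ⬝ᵥ (V *ᵥ (θ - θh)) ≤ β ∧ ∀ y ∈ X, y ⬝ᵥ θ ≤ a ⬝ᵥ θ).Nonempty)
    (α : ℝ) (hα : 0 < α)
    (halign : ∀ v : Fin d → ℝ,
      ∀ x ∈ X.filter fun a => ∃ θ : Fin d → ℝ,
        (θ - θh) ⬝ᵥ (V *ᵥ (θ - θh)) ≤ β ∧ ∀ y ∈ X, y ⬝ᵥ θ ≤ a ⬝ᵥ θ,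
      ∀ y ∈ X.filter fun a => ∃ θ : Fin d → ℝ,
        (θ - θh) ⬝ᵥ (V *ᵥ (θ - θh)) ≤ β ∧ ∀ y' ∈ X, y' ⬝ᵥ θ ≤ a ⬝ᵥ θ,
      ∃ z ∈ X.filter fun a => ∃ θ : Fin d → ℝ,
        (θ - θh) ⬝ᵥ (V *ᵥ (θ - θh)) ≤ β ∧ ∀ y' ∈ X, y' ⬝ᵥ θ ≤ a ⬝ᵥ θ,
        ((x - y) ⬝ᵥ v) ^ 2 ≤ α * (((A z)ᵀ *ᵥ v) ⬝ᵥ ((A z)ᵀ *ᵥ v)))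
    (x : Fin d → ℝ)
    (hx : x ∈ X.filter fun a => ∃ θ : Fin d → ℝ,
        (θ - θh) ⬝ᵥ (V *ᵥ (θ - θh)) ≤ β ∧ ∀ y ∈ X, y ⬝ᵥ θ ≤ a ⬝ᵥ θ) :
    (X.sup' hX fun y =>
        (y - x) ⬝ᵥ θh + Real.sqrt β * Real.sqrt ((y - x) ⬝ᵥ (V⁻¹ *ᵥ (y - x)))) ^ 2 ≤
      8 * α * β *
        ((X.filter fun a => ∃ θ : Fin d → ℝ,
            (θ - θh) ⬝ᵥ (V *ᵥ (θ - θh)) ≤ β ∧ ∀ y ∈ X, y ⬝ᵥ θ ≤ a ⬝ᵥ θ).sup' hP fun z =>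
          Real.log (Matrix.det ((1 : Matrix (Fin m) (Fin m) ℝ) + (A z)ᵀ * V⁻¹ * A z))) := by
  obtain ⟨hxX, θx, hθxC, hθx⟩ := mem_filter.mp hx
  have hV : V.PosDef := posDef_of_one_le hVI
  obtain ⟨y', hy', θ', hθ', hgap⟩ := exists_gap_le_dotProduct hX hV θh hβ.le hθx
  obtain ⟨z, hzP, hz⟩ := halign (θ' - θx) y' (mem_filter.mpr ⟨hy', θ', hθ'⟩) x hx
  set I := Real.log (1 + (A z)ᵀ * V⁻¹ * A z).det
  have hB0 : ((A z)ᵀ * V⁻¹ * A z).PosSemidef := by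
    simpa using hV.inv.posSemidef.conjTranspose_mul_mul_same (A z)
  have hB1 : (A z)ᵀ * V⁻¹ * A z ≤ 1 :=
    transpose_mul_mul_le_one (hA z (mem_filter.mp hzP).1) (inv_le_one_of_one_le hVI)
  have hI : 0 ≤ I := hB0.log_det_one_add_nonneg
  have hwidth : (θ' - θx) ⬝ᵥ V *ᵥ (θ' - θx) ≤ 4 * β := by
    have hpar := hV.posSemidef.dotProduct_mulVec_sub_le (θ' - θh) (θx - θh)
    rw [sub_sub_sub_cancel_right] at hpar
    linarith [hθ'.1, hθxC]
  have hgap0 : 0 ≤ X.sup' hX fun y =>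
      (y - x) ⬝ᵥ θh + Real.sqrt β * Real.sqrt ((y - x) ⬝ᵥ (V⁻¹ *ᵥ (y - x))) :=
    le_sup'_of_le _ hxX (by simp)
  calc _ ≤ ((y' - x) ⬝ᵥ (θ' - θx)) ^ 2 := pow_le_pow_left₀ hgap0 hgap 2
    _ ≤ α * (((A z)ᵀ *ᵥ (θ' - θx)) ⬝ᵥ ((A z)ᵀ *ᵥ (θ' - θx))) := hz
    _ ≤ α * (2 * I * ((θ' - θx) ⬝ᵥ V *ᵥ (θ' - θx))) := by
        gcongr
        exact transpose_mulVec_dotProduct_self_le hV (by positivity)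
          (hB0.le_two_mul_log_det_one_add_smul_one hB1) _
    _ ≤ α * (2 * I * (4 * β)) := by gcongr
    _ = 8 * α * β * I := by ring
    _ ≤ _ := by gcongr; exact le_sup' (fun z => Real.log (1 + (A z)ᵀ * V⁻¹ * A z).det) hzP

/-- **Lemma 5 of the paper.** In a locally observable game with alignment
constant `α` for the plausible maximizer set `P`, every `x ∈ P` satisfies
`Δ(x)² ≤ 8 α β max_{z ∈ P} I(z)`, where `Δ` is the gap estimate and
`I(z) = log det (I_m + A_zᵀ V⁻¹ A_z)` the information gain. -/
theorem stmt8 (d m : ℕ) (X : Finset (Fin d → ℝ)) (hX : X.Nonempty)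
    (A : (Fin d → ℝ) → Matrix (Fin d) (Fin m) ℝ)
    (hA : ∀ x ∈ X, ((1 : Matrix (Fin m) (Fin m) ℝ) - (A x)ᵀ * A x).PosSemidef)
    (V : Matrix (Fin d) (Fin d) ℝ) (hVsymm : V.IsHermitian)
    (hVI : (V - (1 : Matrix (Fin d) (Fin d) ℝ)).PosSemidef)
    (θh : Fin d → ℝ) (β : ℝ) (hβ : 0 < β)
    (hP : (X.filter fun a => ∃ θ : Fin d → ℝ,
        (θ - θh) ⬝ᵥ (V *ᵥ (θ - θh)) ≤ β ∧ ∀ y ∈ X, y ⬝ᵥ θ ≤ a ⬝ᵥ θ).Nonempty)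
    (α : ℝ) (hα : 0 < α)
    (halign : ∀ v : Fin d → ℝ,
      ∀ x ∈ X.filter fun a => ∃ θ : Fin d → ℝ,
        (θ - θh) ⬝ᵥ (V *ᵥ (θ - θh)) ≤ β ∧ ∀ y ∈ X, y ⬝ᵥ θ ≤ a ⬝ᵥ θ,
      ∀ y ∈ X.filter fun a => ∃ θ : Fin d → ℝ,
        (θ - θh) ⬝ᵥ (V *ᵥ (θ - θh)) ≤ β ∧ ∀ y' ∈ X, y' ⬝ᵥ θ ≤ a ⬝ᵥ θ,
      ∃ z ∈ X.filter fun a => ∃ θ : Fin d → ℝ,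
        (θ - θh) ⬝ᵥ (V *ᵥ (θ - θh)) ≤ β ∧ ∀ y' ∈ X, y' ⬝ᵥ θ ≤ a ⬝ᵥ θ,
        ((x - y) ⬝ᵥ v) ^ 2 ≤ α * (((A z)ᵀ *ᵥ v) ⬝ᵥ ((A z)ᵀ *ᵥ v)))
    (x : Fin d → ℝ)
    (hx : x ∈ X.filter fun a => ∃ θ : Fin d → ℝ,
        (θ - θh) ⬝ᵥ (V *ᵥ (θ - θh)) ≤ β ∧ ∀ y ∈ X, y ⬝ᵥ θ ≤ a ⬝ᵥ θ) :
    (X.sup' hX fun y =>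
        (y - x) ⬝ᵥ θh + Real.sqrt β * Real.sqrt ((y - x) ⬝ᵥ (V⁻¹ *ᵥ (y - x)))) ^ 2 ≤
      8 * α * β *
        ((X.filter fun a => ∃ θ : Fin d → ℝ,
            (θ - θh) ⬝ᵥ (V *ᵥ (θ - θh)) ≤ β ∧ ∀ y ∈ X, y ⬝ᵥ θ ≤ a ⬝ᵥ θ).sup' hP fun z =>
          Real.log (Matrix.det ((1 : Matrix (Fin m) (Fin m) ℝ) + (A z)ᵀ * V⁻¹ * A z))) :=
  stmt8_general d m X hX A hA V hVI θh β hβ hP α hα halign x hx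
end

section
/- Let V ∈ ℝ^{d×d} be symmetric positive definite, let A ∈ ℝ^{d×m} be any matrix, and let w ∈ ℝ^d be nonzero. Then (wᵀ V^{-1} w) / (wᵀ (V + AAᵀ)^{-1} w) ≤ det(I_m + Aᵀ V^{-1} A). Equivalently, the directed information gain log((wᵀ V^{-1} w)/(wᵀ (V + AAᵀ)^{-1} w)) is at most the full information gain log det(I_m + Aᵀ V^{-1} A). -/
/-!
The quantity `det V · wᵀ V⁻¹ w` (that is, `wᵀ adj(V) w`) does not decrease when a positive
semidefinite `P` is added to a positive definite `V`. Since `P` is a sum of rank-one terms `a aᵀ`,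
it suffices to treat `V + a aᵀ`: by the matrix determinant lemma and the Sherman–Morrison formula
the quantity grows by `det V · ((aᵀV⁻¹a)(wᵀV⁻¹w) - (wᵀV⁻¹a)²)`, which is nonnegative by
Cauchy–Schwarz for the inner product given by `V⁻¹`. Taking `P = A Aᵀ` and using
`det (V + A Aᵀ) = det V · det (1 + Aᵀ V⁻¹ A)` gives the inequality.
-/

open Matrix

namespace Matrix

variable {n : Type*} [Fintype n]

theorem PosSemidef.dotProduct_mulVec_sq_le {M : Matrix n n ℝ} (hM : M.PosSemidef) (x y : n → ℝ) :
    (x ⬝ᵥ M *ᵥ y) ^ 2 ≤ (x ⬝ᵥ M *ᵥ x) * (y ⬝ᵥ M *ᵥ y) := by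
  let := M.toSeminormedAddCommGroup hM
  let := M.toInnerProductSpace hM
  have hinner (a b : n → ℝ) : inner ℝ a b = a ⬝ᵥ M *ᵥ b := by
    change (M *ᵥ b) ⬝ᵥ star a = _
    rw [star_trivial, dotProduct_comm]
  simpa only [sq, hinner] using real_inner_mul_inner_self_le x y

variable [DecidableEq n]

theorem det_add_vecMulVec {K : Type*} [Field K] {V : Matrix n n K} (hV : IsUnit V.det)
    (u v : n → K) : (V + vecMulVec u v).det = V.det * (1 + v ⬝ᵥ V⁻¹ *ᵥ u) := by
  rw [vecMulVec_eq Unit, det_add_replicateCol_mul_replicateRow hV, det_unique (n := Unit),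
    Matrix.mul_assoc, ← replicateCol_mulVec, add_apply, one_apply_eq,
    replicateRow_mul_replicateCol_apply]

theorem inv_add_vecMulVec_mulVec {K : Type*} [Field K] {V : Matrix n n K} (hV : IsUnit V.det)
    {u v : n → K} (h : 1 + v ⬝ᵥ V⁻¹ *ᵥ u ≠ 0) (w : n → K) :
    (V + vecMulVec u v)⁻¹ *ᵥ w =
      V⁻¹ *ᵥ w - ((v ⬝ᵥ V⁻¹ *ᵥ w) / (1 + v ⬝ᵥ V⁻¹ *ᵥ u)) • V⁻¹ *ᵥ u := by
  have hW : IsUnit (V + vecMulVec u v).det := by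
    rw [det_add_vecMulVec hV]
    exact hV.mul h.isUnit
  let := (V + vecMulVec u v).invertibleOfIsUnitDet hW
  refine inv_mulVec_eq_vec ?_
  rw [add_mulVec, vecMulVec_mulVec, mulVec_sub, mulVec_smul, mulVec_mulVec, mulVec_mulVec,
    mul_nonsing_inv V hV, one_mulVec, one_mulVec, dotProduct_sub, dotProduct_smul, smul_eq_mul,
    op_smul_eq_smul]
  ext i
  simp only [Pi.add_apply, Pi.sub_apply, Pi.smul_apply, smul_eq_mul]
  field_simp
  ring

theorem PosDef.det_mul_dotProduct_inv_mulVec_le_add_vecMulVec {V : Matrix n n ℝ} (hV : V.PosDef)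
    (a w : n → ℝ) :
    V.det * (w ⬝ᵥ V⁻¹ *ᵥ w) ≤ (V + vecMulVec a a).det * (w ⬝ᵥ (V + vecMulVec a a)⁻¹ *ᵥ w) := by
  have hdetV : IsUnit V.det := hV.det_pos.ne'.isUnit
  have hVinv : V⁻¹.PosSemidef := hV.inv.posSemidef
  set q := w ⬝ᵥ V⁻¹ *ᵥ w
  set s := w ⬝ᵥ V⁻¹ *ᵥ a
  set c := a ⬝ᵥ V⁻¹ *ᵥ a
  have hc : 0 ≤ c := by simpa using hVinv.dotProduct_mulVec_nonneg a
  have hsymm : a ⬝ᵥ V⁻¹ *ᵥ w = s := by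
    rw [dotProduct_mulVec, ← mulVec_transpose, ← conjTranspose_eq_transpose_of_trivial,
      hVinv.isHermitian.eq, dotProduct_comm]
  have hdet : (V + vecMulVec a a).det = V.det * (1 + c) := det_add_vecMulVec hdetV a a
  have hquad : w ⬝ᵥ (V + vecMulVec a a)⁻¹ *ᵥ w = q - s ^ 2 / (1 + c) := by
    rw [inv_add_vecMulVec_mulVec hdetV (by positivity) w, dotProduct_sub, dotProduct_smul,
      smul_eq_mul, hsymm]
    ring
  have hcs : s ^ 2 ≤ q * c := hVinv.dotProduct_mulVec_sq_le w a
  calc V.det * q ≤ V.det * ((1 + c) * q - s ^ 2) :=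
        mul_le_mul_of_nonneg_left (by linarith) hV.det_pos.le
    _ = (V + vecMulVec a a).det * (w ⬝ᵥ (V + vecMulVec a a)⁻¹ *ᵥ w) := by
      rw [hdet, hquad]
      field_simp

theorem PosDef.det_mul_dotProduct_inv_mulVec_le_add {V P : Matrix n n ℝ} (hV : V.PosDef)
    (hP : P.PosSemidef) (w : n → ℝ) :
    V.det * (w ⬝ᵥ V⁻¹ *ᵥ w) ≤ (V + P).det * (w ⬝ᵥ (V + P)⁻¹ *ᵥ w) := by
  obtain ⟨m, v, rfl⟩ := posSemidef_iff_eq_sum_vecMulVec.mp hP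
  simp only [star_trivial]
  suffices ∀ s : Finset (Fin m), ∀ V : Matrix n n ℝ, V.PosDef →
      V.det * (w ⬝ᵥ V⁻¹ *ᵥ w) ≤ (V + ∑ i ∈ s, vecMulVec (v i) (v i)).det *
        (w ⬝ᵥ (V + ∑ i ∈ s, vecMulVec (v i) (v i))⁻¹ *ᵥ w) from this _ V hV
  intro s
  induction s using Finset.induction_on with
  | empty => simp
  | insert i s hi ih =>
    intro V hV
    rw [Finset.sum_insert hi, ← add_assoc]
    exact (hV.det_mul_dotProduct_inv_mulVec_le_add_vecMulVec (v i) w).trans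
      (ih _ (hV.add_posSemidef (by simpa using posSemidef_vecMulVec_self_star (v i))))

end Matrix

theorem stmt9_general (d m : ℕ) (V : Matrix (Fin d) (Fin d) ℝ) (hV : V.PosDef)
    (A : Matrix (Fin d) (Fin m) ℝ) (w : Fin d → ℝ) :
    (w ⬝ᵥ (V⁻¹ *ᵥ w)) / (w ⬝ᵥ ((V + A * Aᵀ)⁻¹ *ᵥ w)) ≤
      Matrix.det ((1 : Matrix (Fin m) (Fin m) ℝ) + Aᵀ * V⁻¹ * A) := by
  have hdetV : 0 < V.det := hV.det_pos
  have hAAt : (A * Aᵀ).PosSemidef := by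
    simpa [conjTranspose_eq_transpose_of_trivial] using posSemidef_self_mul_conjTranspose A
  have hW : (V + A * Aᵀ).PosDef := hV.add_posSemidef hAAt
  have hdet : (V + A * Aᵀ).det = V.det * (1 + Aᵀ * V⁻¹ * A).det :=
    det_add_mul A Aᵀ hdetV.ne'.isUnit
  have hmono := hV.det_mul_dotProduct_inv_mulVec_le_add hAAt w
  rw [hdet, mul_assoc] at hmono
  refine div_le_of_le_mul₀ (by simpa using hW.inv.posSemidef.dotProduct_mulVec_nonneg w) ?_
    (le_of_mul_le_mul_left hmono hdetV)
  exact (pos_of_mul_pos_right (hdet ▸ hW.det_pos) hdetV.le).le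

/-- **information processing inequality.** For a symmetric positive definite
matrix `V`, any `d × m` matrix `A`, and any nonzero `w ∈ ℝ^d`,
`(wᵀ V⁻¹ w) / (wᵀ (V + AAᵀ)⁻¹ w) ≤ det (I_m + Aᵀ V⁻¹ A)`. -/
theorem stmt9 (d m : ℕ) (V : Matrix (Fin d) (Fin d) ℝ) (hV : V.PosDef)
    (A : Matrix (Fin d) (Fin m) ℝ) (w : Fin d → ℝ) (hw : w ≠ 0) :
    (w ⬝ᵥ (V⁻¹ *ᵥ w)) / (w ⬝ᵥ ((V + A * Aᵀ)⁻¹ *ᵥ w)) ≤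
      Matrix.det ((1 : Matrix (Fin m) (Fin m) ℝ) + Aᵀ * V⁻¹ * A) :=
  stmt9_general d m V hV A w
end
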